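/- Let I be an ideal of C(X). In the space C(X) with the m^I-topology, the path component of the zero function and the connected component of the zero function both equal C_ψ(X) ∩ I, where C_ψ(X) is the set of all f ∈ C(X) whose support cl_X({x ∈ X : f(x) ≠ 0}) is a pseudocompact subspace of X. -/

import Mathlib

open Set Topology TopologicalSpace Pointwise

/-- `⋂ Z[I] = ⋂_{g ∈ I} Z(g)`, the intersection of the zero sets of members of `I`. -/
def zInter {X : Type*} [TopologicalSpace X] (I : Ideal C(X, ℝ)) : Set X :=
  {x | ∀ g ∈ I, g x = 0}

/-- `B_u(f, I, ε) = {g ∈ C(X) : sup_{x ∈ X} |f x - g x| < ε and f - g ∈ I}`. -/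
def uBall {X : Type*} [TopologicalSpace X] (I : Ideal C(X, ℝ)) (f : C(X, ℝ)) (ε : ℝ) :
    Set C(X, ℝ) :=
  {g | (∃ M, M < ε ∧ ∀ x, |f x - g x| ≤ M) ∧ f - g ∈ I}

/-- The `u^I`-topology on `C(X)`, with open base `{B_u(f, I, ε) : f ∈ C(X), ε > 0}`. -/
def uTopology {X : Type*} [TopologicalSpace X] (I : Ideal C(X, ℝ)) :
    TopologicalSpace C(X, ℝ) :=
  TopologicalSpace.generateFrom {B | ∃ f ε, 0 < ε ∧ B = uBall I f ε}

/-- `B_m(f, I, u) = {g ∈ C(X) : |f x - g x| < u x for all x ∈ X and f - g ∈ I}`. -/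
def mBall {X : Type*} [TopologicalSpace X] (I : Ideal C(X, ℝ)) (f u : C(X, ℝ)) :
    Set C(X, ℝ) :=
  {g | (∀ x, |f x - g x| < u x) ∧ f - g ∈ I}

/-- The `m^I`-topology on `C(X)`, with open base
`{B_m(f, I, u) : f ∈ C(X), u ∈ C₊(X)}`. -/
def mTopology {X : Type*} [TopologicalSpace X] (I : Ideal C(X, ℝ)) :
    TopologicalSpace C(X, ℝ) :=
  TopologicalSpace.generateFrom {B | ∃ f u, (∀ x, 0 < u x) ∧ B = mBall I f u}

/-- A subset `Y` of `X` is bounded if every `f ∈ C(X)` is bounded on `Y`. -/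
def BoundedOn {X : Type*} [TopologicalSpace X] (Y : Set X) : Prop :=
  ∀ f : C(X, ℝ), ∃ M : ℝ, ∀ x ∈ Y, |f x| ≤ M

/-- `X` is `I`-pseudocompact if `X ∖ ⋂ Z[I]` is a bounded subset of `X`. -/
def IPseudocompact {X : Type*} [TopologicalSpace X] (I : Ideal C(X, ℝ)) : Prop :=
  BoundedOn (zInter I)ᶜ

/-- A subset `S` of `X` is pseudocompact (as a subspace) if every continuous
real-valued function on the subspace `S` is bounded. -/
def PseudocompactOn {X : Type*} [TopologicalSpace X] (S : Set X) : Prop :=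
  ∀ g : C(S, ℝ), ∃ M : ℝ, ∀ y : S, |g y| ≤ M

/-! If `f ∈ I` has pseudocompact support, then `f / w` is bounded for every positive `w`, and
this domination is exactly what makes `t ↦ t • f` continuous into the `m^I`-topology, so `f` is
joined to `0` by a segment. Conversely, `I` and, for each positive `w`, the set of functions
dominated by a multiple of `w` are clopen and contain `0`; so every `f` in the component of `0`
lies in `I` and is dominated by every positive `w`. If the support of such an `f` were not
pseudocompact, it would contain a locally finite sequence of disjoint nonempty open sets
`V n ⊆ coz f`; complete regularity gives a continuous `s` with `s (x n) = n / |f (x n)|` at points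
`x n ∈ V n`, and `f` is not dominated by `1 / (1 + |s|)`. -/

open Filter Function

section MTopology

variable {X : Type*} [TopologicalSpace X] (I : Ideal C(X, ℝ))

lemma mem_mBall_self (f : C(X, ℝ)) {u : C(X, ℝ)} (hu : ∀ x, 0 < u x) : f ∈ mBall I f u :=
  ⟨fun x => by simpa using hu x, by simp⟩

lemma isOpen_mBall (f : C(X, ℝ)) {u : C(X, ℝ)} (hu : ∀ x, 0 < u x) :
    IsOpen[mTopology I] (mBall I f u) :=
  GenerateOpen.basic _ ⟨f, u, hu, rfl⟩

lemma isClopen_of_mem_mBall_iff {A : Set C(X, ℝ)} {u : C(X, ℝ)} (hu : ∀ x, 0 < u x)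
    (hA : ∀ f g, g ∈ mBall I f u → (f ∈ A ↔ g ∈ A)) : @IsClopen _ (mTopology I) A := by
  let := mTopology I
  have isOpen_of_forall {B : Set C(X, ℝ)} (hB : ∀ f g, g ∈ mBall I f u → f ∈ B → g ∈ B) :
      IsOpen B :=
    isOpen_iff_forall_mem_open.2 fun f hf =>
      ⟨mBall I f u, fun g hg => hB f g hg hf, isOpen_mBall I f hu, mem_mBall_self I f hu⟩
  exact ⟨isOpen_compl_iff.1 (isOpen_of_forall fun f g hg hf hgA => hf ((hA f g hg).2 hgA)),
    isOpen_of_forall fun f g hg => (hA f g hg).1⟩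

lemma isClopen_ideal : @IsClopen _ (mTopology I) (I : Set C(X, ℝ)) :=
  isClopen_of_mem_mBall_iff I (u := 1) (fun _ => one_pos) fun f g hfg =>
    ⟨fun hf => by simpa using I.sub_mem hf hfg.2, fun hg => by simpa using I.add_mem hfg.2 hg⟩

end MTopology

section Dominated

variable {X : Type*} [TopologicalSpace X]

def dominatedBy (w : C(X, ℝ)) : Set C(X, ℝ) := {g | ∃ M : ℝ, ∀ x, |g x| ≤ M * w x}

lemma zero_mem_dominatedBy (w : C(X, ℝ)) : 0 ∈ dominatedBy w := ⟨0, fun x => by simp⟩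

lemma mem_dominatedBy_of_abs_sub_lt {w f g : C(X, ℝ)} (hf : f ∈ dominatedBy w)
    (hfg : ∀ x, |f x - g x| < w x) : g ∈ dominatedBy w := by
  obtain ⟨M, hM⟩ := hf
  refine ⟨M + 1, fun x => ?_⟩
  calc |g x| ≤ |f x| + |f x - g x| := by
        linarith [abs_sub_abs_le_abs_sub (g x) (f x), abs_sub_comm (g x) (f x)]
    _ ≤ M * w x + w x := add_le_add (hM x) (hfg x).le
    _ = (M + 1) * w x := by ring

lemma isClopen_dominatedBy (I : Ideal C(X, ℝ)) {w : C(X, ℝ)} (hw : ∀ x, 0 < w x) :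
    @IsClopen _ (mTopology I) (dominatedBy w) :=
  isClopen_of_mem_mBall_iff I hw fun _ _ hfg =>
    ⟨fun hf => mem_dominatedBy_of_abs_sub_lt hf hfg.1,
      fun hg => mem_dominatedBy_of_abs_sub_lt hg fun x => by simpa [abs_sub_comm] using hfg.1 x⟩

lemma PseudocompactOn.mem_dominatedBy {g : C(X, ℝ)}
    (hg : PseudocompactOn (closure {x : X | g x ≠ 0})) {w : C(X, ℝ)} (hw : ∀ x, 0 < w x) :
    g ∈ dominatedBy w := by
  obtain ⟨M, hM⟩ := hg ⟨fun y => g y / w y,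
    (g.continuous.comp continuous_subtype_val).div (w.continuous.comp continuous_subtype_val)
      fun y => (hw y).ne'⟩
  refine ⟨max M 0, fun x => ?_⟩
  by_cases hx : g x = 0
  · simpa [hx] using mul_nonneg (le_max_right M 0) (hw x).le
  · have hquot := hM ⟨x, subset_closure hx⟩
    rw [ContinuousMap.coe_mk, abs_div, abs_of_pos (hw x), div_le_iff₀ (hw x)] at hquot
    exact hquot.trans (mul_le_mul_of_nonneg_right (le_max_left M 0) (hw x).le)

end Dominated

section Path

variable {X : Type*} [TopologicalSpace X]

lemma continuous_smul_mTopology (I : Ideal C(X, ℝ)) {f : C(X, ℝ)} (hfI : f ∈ I)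
    (hf : ∀ w : C(X, ℝ), (∀ x, 0 < w x) → f ∈ dominatedBy w) :
    Continuous[_, mTopology I] fun t : ℝ => t • f := by
  rw [mTopology, continuous_generateFrom_iff]
  rintro _ ⟨p, u, -, rfl⟩
  refine Metric.isOpen_iff.2 fun t₀ ⟨ht₀, ht₀I⟩ => ?_
  -- `f` is dominated by the slack left at `t₀`
  let d : C(X, ℝ) := ⟨fun x => u x - |p x - t₀ * f x|, by fun_prop⟩
  have hd : ∀ x, 0 < d x := fun x => sub_pos.2 (by simpa using ht₀ x)
  obtain ⟨M, hM⟩ := hf d hd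
  refine ⟨(|M| + 1)⁻¹, by positivity, fun t ht => ⟨fun x => ?_, ?_⟩⟩
  · have hMt : |t₀ - t| * M < 1 := by
      rw [Metric.mem_ball, Real.dist_eq, abs_sub_comm, ← one_div, lt_div_iff₀ (by positivity)] at ht
      nlinarith [le_abs_self M, abs_nonneg (t₀ - t)]
    calc |p x - (t • f) x| = |(p x - t₀ * f x) + (t₀ - t) * f x| := by
          rw [ContinuousMap.smul_apply, smul_eq_mul]; ring_nf
      _ ≤ |p x - t₀ * f x| + |t₀ - t| * |f x| := by rw [← abs_mul]; exact abs_add_le _ _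
      _ ≤ |p x - t₀ * f x| + |t₀ - t| * (M * d x) := by gcongr; exact hM x
      _ < |p x - t₀ * f x| + d x := by nlinarith [hd x]
      _ = u x := by simp [d]
  · have : p - t • f = (p - t₀ • f) + (t₀ - t) • f := by module
    rw [this]
    exact I.add_mem ht₀I (I.smul_of_tower_mem (t₀ - t) hfI)

lemma joined_zero_of_continuous_smul {E : Type*} [TopologicalSpace E] [AddCommGroup E]
    [Module ℝ E] {f : E} (hf : Continuous fun t : ℝ => t • f) : Joined 0 f :=
  ⟨⟨⟨fun t => (t : ℝ) • f, hf.comp continuous_subtype_val⟩, by simp, by simp⟩⟩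

end Path

lemma exists_seq_pairwise_one_le_dist {α : Type*} (k : α → ℝ) (hk : ∀ M, ∃ a, M < k a) :
    ∃ y : ℕ → α, Pairwise fun m n => 1 ≤ dist (k (y m)) (k (y n)) := by
  choose Y hY using hk
  let y : ℕ → α := fun n => Nat.rec (Y 0) (fun _ a => Y (k a + 1)) n
  have hmono : StrictMono fun n : ℕ => k (y n) - n :=
    strictMono_nat_of_lt_succ fun n => by
      have := hY (k (y n) + 1)
      push_cast
      linarith
  refine ⟨y, fun m n hmn => ?_⟩
  wlog hlt : m < n generalizing m n
  · rw [dist_comm]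
    exact this n m hmn.symm (hmn.symm.lt_of_le (not_lt.1 hlt))
  have hgap : k (y m) - m < k (y n) - n := hmono hlt
  have : (m : ℝ) + 1 ≤ n := by exact_mod_cast hlt
  rw [Real.dist_eq, abs_sub_comm, abs_of_nonneg (by linarith)]
  linarith

lemma locallyFinite_ball_of_pairwise_le_dist {ι α : Type*} [PseudoMetricSpace α] {a : ι → α}
    {δ : ℝ} (ha : Pairwise fun m n => δ ≤ dist (a m) (a n)) :
    LocallyFinite fun n => Metric.ball (a n) (δ / 4) := by
  intro z
  rcases le_or_gt δ 0 with hδ | hδ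
  · exact ⟨univ, univ_mem, by simp [Metric.ball_eq_empty.2 (by linarith : δ / 4 ≤ 0)]⟩
  refine ⟨Metric.ball z (δ / 4), Metric.ball_mem_nhds z (by positivity),
    Set.Subsingleton.finite ?_⟩
  rintro m ⟨x, hxm, hxz⟩ n ⟨y, hyn, hyz⟩
  by_contra hmn
  rw [Metric.mem_ball] at hxm hxz hyn hyz
  linarith [ha hmn, dist_triangle4 (a m) x z (a n), dist_triangle z y (a n), dist_comm x (a m),
    dist_comm z y]

lemma exists_locallyFinite_of_unbounded {Y : Type*} [TopologicalSpace Y] (h : C(Y, ℝ))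
    (hh : ∀ M, ∃ y, M < |h y|) :
    ∃ O : ℕ → Set Y, (∀ n, IsOpen (O n)) ∧ (∀ n, (O n).Nonempty) ∧
      Pairwise (Disjoint on O) ∧ LocallyFinite O := by
  obtain ⟨y, hy⟩ := exists_seq_pairwise_one_le_dist (fun z => |h z|) hh
  have hk : Continuous fun z => |h z| := by fun_prop
  refine ⟨fun n => (fun z => |h z|) ⁻¹' Metric.ball |h (y n)| (1 / 4),
    fun n => Metric.isOpen_ball.preimage hk, fun n => ⟨y n, by simp⟩,
    fun m n hmn => (Metric.ball_disjoint_ball (by linarith [hy hmn])).preimage _,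
    (locallyFinite_ball_of_pairwise_le_dist hy).preimage_continuous hk⟩

section NotPseudocompact

variable {X : Type*} [TopologicalSpace X]

lemma LocallyFinite.image_val_of_isClosed {ι : Type*} {S : Set X}
    (hS : IsClosed S) {O : ι → Set S} (hO : LocallyFinite O) :
    LocallyFinite fun i => ((↑) : S → X) '' O i := by
  intro x
  by_cases hx : x ∈ S
  · obtain ⟨t, ht, hfin⟩ := hO ⟨x, hx⟩
    obtain ⟨u, hu, hut⟩ := (mem_nhds_subtype S _ t).1 ht
    refine ⟨u, hu, hfin.subset ?_⟩
    rintro i ⟨_, ⟨z, hzO, rfl⟩, hzu⟩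
    exact ⟨z, hzO, hut hzu⟩
  · refine ⟨Sᶜ, hS.isOpen_compl.mem_nhds hx, ?_⟩
    simp

lemma exists_locallyFinite_of_not_pseudocompactOn_closure {U : Set X} (hU : IsOpen U)
    (hcl : ¬PseudocompactOn (closure U)) :
    ∃ V : ℕ → Set X, (∀ n, IsOpen (V n)) ∧ (∀ n, (V n).Nonempty) ∧ (∀ n, V n ⊆ U) ∧
      Pairwise (Disjoint on V) ∧ LocallyFinite V := by
  simp only [PseudocompactOn, not_forall, not_exists, not_le] at hcl
  obtain ⟨h, hh⟩ := hcl
  obtain ⟨O, hOo, hOne, hOd, hOlf⟩ := exists_locallyFinite_of_unbounded h hh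
  choose W hWo hWO using fun n => isOpen_induced_iff.1 (hOo n)
  have hsub : ∀ n, W n ∩ U ⊆ Subtype.val '' O n := fun n x ⟨hxW, hxU⟩ =>
    ⟨⟨x, subset_closure hxU⟩, hWO n ▸ hxW, rfl⟩
  refine ⟨fun n => W n ∩ U, fun n => (hWo n).inter hU, fun n => ?_, fun n => inter_subset_right,
    fun m n hmn => ?_, (hOlf.image_val_of_isClosed isClosed_closure).subset hsub⟩
  · obtain ⟨y, hy⟩ := hOne n
    exact mem_closure_iff.1 y.2 (W n) (hWo n) (by rw [← hWO n] at hy; exact hy)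
  · exact ((disjoint_image_iff Subtype.val_injective).2 (hOd hmn)).mono (hsub m) (hsub n)

lemma exists_continuousMap_apply_eq [CompletelyRegularSpace X] {ι : Type*} {V : ι → Set X}
    (hV : ∀ i, IsOpen (V i)) (hVd : Pairwise (Disjoint on V)) (hVlf : LocallyFinite V)
    {x : ι → X} (hx : ∀ i, x i ∈ V i) (c : ι → ℝ) : ∃ s : C(X, ℝ), ∀ i, s (x i) = c i := by
  choose φ hφc hφx hφV using fun i =>
    CompletelyRegularSpace.completely_regular_isOpen (x i) (V i) (hV i) (hx i)
  let b : ι → X → ℝ := fun i z => c i * (1 - φ i z)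
  have hb : ∀ i, support (b i) ⊆ V i := fun i z hz => by
    by_contra hzV
    exact hz (by simp [b, hφV i hzV])
  refine ⟨⟨fun z => ∑ᶠ i, b i z, continuous_finsum (fun i => by fun_prop) (hVlf.subset hb)⟩,
    fun i => ?_⟩
  change ∑ᶠ j, b j (x i) = c i
  rw [finsum_eq_single _ i fun j hji => ?_]
  · simp [b, hφx i]
  · exact notMem_support.1 fun hj => (hVd hji).ne_of_mem (hb j hj) (hx i) rfl

lemma pseudocompactOn_closure_of_forall_mem_dominatedBy [CompletelyRegularSpace X]
    {g : C(X, ℝ)} (hg : ∀ w : C(X, ℝ), (∀ x, 0 < w x) → g ∈ dominatedBy w) :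
    PseudocompactOn (closure {x | g x ≠ 0}) := by
  by_contra hcl
  obtain ⟨V, hVo, hVne, hVg, hVd, hVlf⟩ :=
    exists_locallyFinite_of_not_pseudocompactOn_closure
      (isOpen_ne_fun g.continuous continuous_const) hcl
  choose x hx using hVne
  have hgx : ∀ n, 0 < |g (x n)| := fun n => abs_pos.2 (hVg n (hx n))
  -- for `w = 1 / (1 + |s|)`, `w (x n) = |g (x n)| / (|g (x n)| + n)`, so `g / w` is unbounded
  obtain ⟨s, hs⟩ := exists_continuousMap_apply_eq hVo hVd hVlf hx fun n => n / |g (x n)|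
  have hpos : ∀ z, 0 < 1 + |s z| := fun z => by positivity
  obtain ⟨M, hM⟩ := hg ⟨fun z => (1 + |s z|)⁻¹,
    (continuous_const.add s.continuous.abs).inv₀ fun z => (hpos z).ne'⟩ fun z => inv_pos.2 (hpos z)
  obtain ⟨n, hn⟩ := exists_nat_gt M
  have hMn := hM (x n)
  simp only [ContinuousMap.coe_mk, hs, abs_div, abs_abs, Nat.abs_cast] at hMn
  rw [← div_eq_mul_inv, le_div_iff₀ (by positivity), mul_add, mul_div_cancel₀ _ (hgx n).ne'] at hMn
  linarith [hgx n]

end NotPseudocompact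

/-- in `C(X)` with the `m^I`-topology, the path component and the
connected component of `0` both equal `C_ψ(X) ∩ I`, where
`C_ψ(X) = {f : cl_X {x : f x ≠ 0} is pseudocompact}`. -/
theorem stmt_17 {X : Type*} [TopologicalSpace X] [T35Space X] (I : Ideal C(X, ℝ)) :
    @pathComponent C(X, ℝ) (mTopology I) 0 =
        {f : C(X, ℝ) | PseudocompactOn (closure {x : X | f x ≠ 0})} ∩ (I : Set C(X, ℝ)) ∧
    @connectedComponent C(X, ℝ) (mTopology I) 0 =
        {f : C(X, ℝ) | PseudocompactOn (closure {x : X | f x ≠ 0})} ∩ (I : Set C(X, ℝ)) := by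
  let := mTopology I
  set P := {f : C(X, ℝ) | PseudocompactOn (closure {x : X | f x ≠ 0})} ∩ (I : Set C(X, ℝ))
  have hpath : P ⊆ pathComponent 0 := fun f ⟨hf, hfI⟩ =>
    joined_zero_of_continuous_smul (continuous_smul_mTopology I hfI fun _ => hf.mem_dominatedBy)
  have hcomp : connectedComponent (0 : C(X, ℝ)) ⊆ P := fun f hf =>
    ⟨pseudocompactOn_closure_of_forall_mem_dominatedBy fun w hw =>
      (isClopen_dominatedBy I hw).connectedComponent_subset (zero_mem_dominatedBy w) hf,
      (isClopen_ideal I).connectedComponent_subset I.zero_mem hf⟩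
  have hsub := pathComponent_subset_component (0 : C(X, ℝ))
  exact ⟨(hsub.trans hcomp).antisymm hpath, hcomp.antisymm (hpath.trans hsub)⟩
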